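/- For an interpolatory mask A (A_{2j} = D δ_j) and the prediction-correction filters of the previous construction, perfect reconstruction holds: S_A D_{Ã^T} + S_B D_{B̃^T} = id, where Ã = D^{−1}δ, B has B_1 = I and B_k = 0 otherwise, and (B̃^T)_k = (−1)^{1−k} A_{1−k} D^{−1}. -/

import Mathlib

open scoped BigOperators
open Matrix

/-- Subdivision operator `(S_M c)_j = ∑_k M_{j-2k} c_k`. -/
noncomputable def subd {m : ℕ} (M : ℤ → Matrix (Fin 2 × Fin m) (Fin 2 × Fin m) ℝ)
    (c : ℤ → Fin 2 × Fin m → ℝ) : ℤ → Fin 2 × Fin m → ℝ :=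
  fun j => ∑ᶠ k : ℤ, (M (j - 2 * k)).mulVec (c k)

/-- Decomposition operator `(D_M c)_j = ∑_i M_{i-2j} c_i`. -/
noncomputable def decomp {m : ℕ} (M : ℤ → Matrix (Fin 2 × Fin m) (Fin 2 × Fin m) ℝ)
    (c : ℤ → Fin 2 × Fin m → ℝ) : ℤ → Fin 2 × Fin m → ℝ :=
  fun j => ∑ᶠ i : ℤ, (M (i - 2 * j)).mulVec (c i)

/-- The matrix `D = diag(1, 1/2) ⊗ I_m`. -/
noncomputable def Dmat (m : ℕ) : Matrix (Fin 2 × Fin m) (Fin 2 × Fin m) ℝ :=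
  Matrix.of fun p q => if p = q then (if p.1 = 0 then 1 else 1 / 2) else 0

/-- The matrix `D⁻¹ = diag(1, 2) ⊗ I_m`. -/
noncomputable def Dinv (m : ℕ) : Matrix (Fin 2 × Fin m) (Fin 2 × Fin m) ℝ :=
  Matrix.of fun p q => if p = q then (if p.1 = 0 then 1 else 2) else 0

/-- The mask `B` with symbol `zI`: `B_1 = I`, `B_k = 0` otherwise. -/
noncomputable def Bmask (m : ℕ) : ℤ → Matrix (Fin 2 × Fin m) (Fin 2 × Fin m) ℝ :=
  fun k => if k = 1 then 1 else 0

/-- The mask `At = D⁻¹ δ`. -/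
noncomputable def Amask' (m : ℕ) : ℤ → Matrix (Fin 2 × Fin m) (Fin 2 × Fin m) ℝ :=
  fun k => if k = 0 then Dinv m else 0

/-!
Both `Ã = D⁻¹δ` and `B` have a single tap, so `D_{Ãᵀ} c = (D⁻¹ c_{2k})_k` and `S_B d` places `d`
on the odd samples and zeros on the even ones. At an even sample, interpolation gives
`(S_A D_{Ãᵀ} c)_{2n} = D D⁻¹ c_{2n}`. At an odd sample, split `D_{B̃ᵀ} c` into the even and the
odd taps of `B̃ᵀ`: the odd taps are `A_{2j} D⁻¹ = δ_j`, which return `c_{2n+1}`, and the even taps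
are `-A_{2n+1-2k} D⁻¹`, which cancel the prediction `(S_A D_{Ãᵀ} c)_{2n+1}`.
-/

open Function

section FinsumInt

variable {M : Type*} [AddCommMonoid M]

theorem finsum_int_eq_even_add_odd {f : ℤ → M} (hf : (support f).Finite) :
    ∑ᶠ i, f i = ∑ᶠ k, f (2 * k) + ∑ᶠ k, f (2 * k + 1) := by
  have h2 : Injective fun k : ℤ => 2 * k := fun a b h => by simpa using h
  have h2' : Injective fun k : ℤ => 2 * k + 1 := fun a b h => by simpa using h
  have hdisj : Disjoint (Set.range fun k : ℤ => 2 * k) (Set.range fun k : ℤ => 2 * k + 1) := by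
    refine Set.disjoint_left.2 ?_
    rintro _ ⟨a, rfl⟩ ⟨b, hb⟩
    simp only at hb
    omega
  have hcover : (Set.range fun k : ℤ => 2 * k) ∪ Set.range (fun k : ℤ => 2 * k + 1) = Set.univ :=
    Set.eq_univ_of_forall fun i => by
      obtain ⟨k, rfl | rfl⟩ := Int.even_or_odd' i
      exacts [Or.inl ⟨k, rfl⟩, Or.inr ⟨k, rfl⟩]
  rw [← finsum_mem_range h2, ← finsum_mem_range h2', ← finsum_mem_union' hdisj
    (hf.subset Set.inter_subset_right) (hf.subset Set.inter_subset_right), hcover,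
    finsum_mem_univ]

end FinsumInt

variable {m : ℕ}

theorem Dmat_eq_diagonal : Dmat m = diagonal fun p => if p.1 = 0 then 1 else 1 / 2 := by
  ext p q
  simp [Dmat, diagonal_apply]

theorem Dinv_eq_diagonal : Dinv m = diagonal fun p => if p.1 = 0 then 1 else 2 := by
  ext p q
  simp [Dinv, diagonal_apply]

theorem Dmat_mul_Dinv : Dmat m * Dinv m = 1 := by
  rw [Dmat_eq_diagonal, Dinv_eq_diagonal, diagonal_mul_diagonal, ← diagonal_one]
  congr 1
  ext p
  split_ifs <;> norm_num

theorem Amask'_transpose : (fun i => (Amask' m i)ᵀ) = Pi.single 0 (Dinv m) := by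
  ext i : 1
  rw [Pi.single_apply, Amask', Dinv_eq_diagonal]
  split_ifs <;> simp

theorem Bmask_eq_single : Bmask m = Pi.single 1 1 := by
  ext k : 1
  rw [Pi.single_apply, Bmask]

theorem decomp_single_zero (N : Matrix (Fin 2 × Fin m) (Fin 2 × Fin m) ℝ)
    (c : ℤ → Fin 2 × Fin m → ℝ) (k : ℤ) :
    decomp (Pi.single 0 N) c k = N *ᵥ c (2 * k) := by
  rw [decomp, finsum_eq_single _ (2 * k) fun i hi => ?_]
  · simp
  · rw [Pi.single_apply, if_neg (sub_ne_zero.2 hi), zero_mulVec]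

theorem subd_single_one_two_mul (N : Matrix (Fin 2 × Fin m) (Fin 2 × Fin m) ℝ)
    (d : ℤ → Fin 2 × Fin m → ℝ) (n : ℤ) : subd (Pi.single 1 N) d (2 * n) = 0 := by
  refine finsum_eq_zero_of_forall_eq_zero fun k => ?_
  rw [Pi.single_apply, if_neg (by omega), zero_mulVec]

theorem subd_single_one_two_mul_add_one (N : Matrix (Fin 2 × Fin m) (Fin 2 × Fin m) ℝ)
    (d : ℤ → Fin 2 × Fin m → ℝ) (n : ℤ) : subd (Pi.single 1 N) d (2 * n + 1) = N *ᵥ d n := by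
  rw [subd, finsum_eq_single _ n fun k hk => ?_]
  · simp
  · rw [Pi.single_apply, if_neg (by omega), zero_mulVec]

theorem subd_two_mul_of_interpolatory {A : ℤ → Matrix (Fin 2 × Fin m) (Fin 2 × Fin m) ℝ}
    {N : Matrix (Fin 2 × Fin m) (Fin 2 × Fin m) ℝ} (hA : ∀ j, A (2 * j) = if j = 0 then N else 0)
    (d : ℤ → Fin 2 × Fin m → ℝ) (n : ℤ) : subd A d (2 * n) = N *ᵥ d n := by
  rw [subd, finsum_eq_single _ n fun k hk => ?_]
  · simpa using congrArg (· *ᵥ d n) (hA 0)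
  · rw [← mul_sub, hA, if_neg (sub_ne_zero.2 hk.symm), zero_mulVec]

theorem decomp_eq_even_add_odd {M : ℤ → Matrix (Fin 2 × Fin m) (Fin 2 × Fin m) ℝ}
    (hM : (support M).Finite) (c : ℤ → Fin 2 × Fin m → ℝ) (n : ℤ) :
    decomp M c n = ∑ᶠ k, M (2 * (k - n)) *ᵥ c (2 * k)
      + ∑ᶠ k, M (2 * (k - n) + 1) *ᵥ c (2 * k + 1) := by
  have hfin : (support fun i => M (i - 2 * n) *ᵥ c i).Finite :=
    (hM.preimage (sub_left_injective (b := 2 * n)).injOn).subset fun i hi h0 =>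
      hi (by simp [show M (i - 2 * n) = 0 from h0])
  rw [decomp, finsum_int_eq_even_add_odd hfin]
  congr 1 <;> refine finsum_congr fun k => ?_ <;> ring_nf

noncomputable def correctionMask (A : ℤ → Matrix (Fin 2 × Fin m) (Fin 2 × Fin m) ℝ) :
    ℤ → Matrix (Fin 2 × Fin m) (Fin 2 × Fin m) ℝ :=
  fun k => (-1 : ℝ) ^ (1 - k) • (A (1 - k) * Dinv m)

section correctionMask

variable {A : ℤ → Matrix (Fin 2 × Fin m) (Fin 2 × Fin m) ℝ}

theorem correctionMask_support_finite (hA : (support A).Finite) :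
    (support (correctionMask A)).Finite :=
  (hA.preimage (sub_right_injective (b := (1 : ℤ))).injOn).subset fun k hk h0 =>
    hk (by simp [correctionMask, show A (1 - k) = 0 from h0])

theorem correctionMask_two_mul (l : ℤ) : correctionMask A (2 * l) = -(A (1 - 2 * l) * Dinv m) := by
  rw [correctionMask, (show Odd (1 - 2 * l) from ⟨-l, by ring⟩).neg_one_zpow, neg_one_smul]

theorem correctionMask_two_mul_add_one (hA : ∀ j, A (2 * j) = if j = 0 then Dmat m else 0)
    (l : ℤ) : correctionMask A (2 * l + 1) = if l = 0 then 1 else 0 := by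
  rw [correctionMask, show 1 - (2 * l + 1) = 2 * -l by ring, (even_two_mul _).neg_one_zpow,
    one_smul, hA]
  split_ifs <;> simp_all [Dmat_mul_Dinv]

theorem decomp_correctionMask (hA : (support A).Finite)
    (hinterp : ∀ j, A (2 * j) = if j = 0 then Dmat m else 0) (c : ℤ → Fin 2 × Fin m → ℝ)
    (n : ℤ) : decomp (correctionMask A) c n
      = c (2 * n + 1) - subd A (fun k => Dinv m *ᵥ c (2 * k)) (2 * n + 1) := by
  have hodd : ∑ᶠ k, correctionMask A (2 * (k - n) + 1) *ᵥ c (2 * k + 1) = c (2 * n + 1) := by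
    rw [finsum_eq_single _ n fun k hk => by
      rw [correctionMask_two_mul_add_one hinterp, if_neg (sub_ne_zero.2 hk), zero_mulVec]]
    simpa using congrArg (· *ᵥ c (2 * n + 1)) (correctionMask_two_mul_add_one hinterp 0)
  have heven : ∑ᶠ k, correctionMask A (2 * (k - n)) *ᵥ c (2 * k)
      = -subd A (fun k => Dinv m *ᵥ c (2 * k)) (2 * n + 1) := by
    rw [subd, ← finsum_neg_distrib]
    refine finsum_congr fun k => ?_
    rw [correctionMask_two_mul, neg_mulVec, ← mulVec_mulVec]
    ring_nf
  rw [decomp_eq_even_add_odd (correctionMask_support_finite hA), hodd, heven, neg_add_eq_sub]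

end correctionMask

/-- Perfect reconstruction for the prediction-correction filters associated to an
interpolatory predictor `A`: `S_A D_{Atᵀ} + S_B D_{Btᵀ} = id`. -/
theorem pred_corr_perfect_reconstruction {m : ℕ}
    (A : ℤ → Matrix (Fin 2 × Fin m) (Fin 2 × Fin m) ℝ)
    (hA : (Function.support A).Finite)
    (hinterp : ∀ j : ℤ, A (2 * j) = if j = 0 then Dmat m else 0)
    (BtT : ℤ → Matrix (Fin 2 × Fin m) (Fin 2 × Fin m) ℝ)
    (hBtT : ∀ k : ℤ, BtT k = ((-1 : ℝ) ^ (1 - k)) • (A (1 - k) * Dinv m)) :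
    ∀ (c : ℤ → Fin 2 × Fin m → ℝ) (j : ℤ),
      subd A (decomp (fun i => (Amask' m i)ᵀ) c) j
        + subd (Bmask m) (decomp BtT c) j = c j := by
  obtain rfl : BtT = correctionMask A := funext hBtT
  intro c j
  have hpredict : decomp (fun i => (Amask' m i)ᵀ) c = fun k => Dinv m *ᵥ c (2 * k) := by
    ext1 k
    rw [Amask'_transpose, decomp_single_zero]
  rw [hpredict, Bmask_eq_single]
  obtain ⟨n, rfl | rfl⟩ := Int.even_or_odd' j
  · rw [subd_two_mul_of_interpolatory hinterp, subd_single_one_two_mul, add_zero, mulVec_mulVec,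
      Dmat_mul_Dinv, one_mulVec]
  · rw [subd_single_one_two_mul_add_one, one_mulVec, decomp_correctionMask hA hinterp,
      add_sub_cancel]
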